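/- arXiv:2412.13066 — 2 statements merged into one kernel-verified Lean document; each statement's English description precedes it below -/
import Mathlib

section
/- Let X be a real normed vector space and let 𝒯 be a second topology on X such that whenever a sequence (z_n) converges to 0 in 𝒯 and y ∈ X, the sequence (y + z_n) converges to y in 𝒯. Let (τ_a)_{a∈ℝ} be a one-parameter group of linear isometries of X (i.e. each τ_a : X → X is linear with ‖τ_a x‖ = ‖x‖ for all x, τ_0 = id, and τ_{a+b} = τ_a ∘ τ_b for all a,b ∈ ℝ). Suppose Z ⊆ X satisfies: (1) Z is sequentially 𝒯-closed (if z_n ∈ Z for all n and z_n → z in 𝒯, then z ∈ Z); (2) τ_a(Z) ⊆ Z for every a ∈ ℝ; (3) Z contains a closed ball {y ∈ X : ‖y − x‖ ≤ r} for some x ∈ X and r > 0; (4) for every sequence a_n → ∞ one has τ_{a_n} x → 0 in 𝒯. Then Z contains the closed ball {y ∈ X : ‖y‖ ≤ r} centred at the origin. -/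
/-!
Translating `B̄(x, r)` by `τ_a` and using `τ_a`-invariance of `Z`, the points `y + τ_a x` lie in `Z`
for every `y ∈ B̄(0, r)` and every `a`. Letting `a = n → ∞`, these points `𝒯`-converge to `y`,
which therefore lies in `Z` by sequential closedness.
-/

open Filter

section OneParameterGroup

variable {M : Type*} [AddCommGroup M] [Module ℝ M] {τ : ℝ → M →ₗ[ℝ] M}

theorem apply_apply_neg_of_oneParameterGroup (hid : τ 0 = LinearMap.id)
    (hgrp : ∀ a b : ℝ, τ (a + b) = (τ a).comp (τ b)) (a : ℝ) (v : M) :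
    τ a (τ (-a) v) = v := by
  simpa [hid] using (LinearMap.congr_fun (hgrp a (-a)) v).symm

end OneParameterGroup

theorem add_apply_mem_of_closedBall_subset {X : Type*} [NormedAddCommGroup X]
    [NormedSpace ℝ X] {τ : ℝ → X →ₗ[ℝ] X} (hiso : ∀ (a : ℝ) (x : X), ‖τ a x‖ = ‖x‖)
    (hid : τ 0 = LinearMap.id) (hgrp : ∀ a b : ℝ, τ (a + b) = (τ a).comp (τ b))
    {Z : Set X} (hinv : ∀ a : ℝ, (τ a) '' Z ⊆ Z) {x : X} {r : ℝ}
    (hball : {y : X | ‖y - x‖ ≤ r} ⊆ Z) (a : ℝ) {y : X} (hy : ‖y‖ ≤ r) :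
    y + τ a x ∈ Z := by
  have hpre : τ (-a) y + x ∈ Z := hball (by simpa [hiso] using hy)
  simpa [apply_apply_neg_of_oneParameterGroup hid hgrp] using hinv a ⟨_, hpre, rfl⟩

theorem stmt_0_general {X : Type*} [NormedAddCommGroup X] [NormedSpace ℝ X]
    (𝒯 : TopologicalSpace X)
    (h𝒯 : ∀ (z : ℕ → X) (y : X),
      Tendsto z atTop (@nhds X 𝒯 0) → Tendsto (fun n => y + z n) atTop (@nhds X 𝒯 y))
    (τ : ℝ → X →ₗ[ℝ] X)
    (hiso : ∀ (a : ℝ) (x : X), ‖τ a x‖ = ‖x‖)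
    (hid : τ 0 = LinearMap.id)
    (hgrp : ∀ a b : ℝ, τ (a + b) = (τ a).comp (τ b))
    (Z : Set X)
    (hclosed : ∀ (z : ℕ → X) (l : X), (∀ n, z n ∈ Z) →
      Tendsto z atTop (@nhds X 𝒯 l) → l ∈ Z)
    (hinv : ∀ a : ℝ, (τ a) '' Z ⊆ Z)
    (x : X) (r : ℝ)
    (hball : {y : X | ‖y - x‖ ≤ r} ⊆ Z)
    (hlim : ∀ a : ℕ → ℝ, Tendsto a atTop atTop →
      Tendsto (fun n => τ (a n) x) atTop (@nhds X 𝒯 0)) :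
    {y : X | ‖y‖ ≤ r} ⊆ Z := by
  intro y hy
  have hmem (n : ℕ) : y + τ n x ∈ Z :=
    add_apply_mem_of_closedBall_subset hiso hid hgrp hinv hball n hy
  exact hclosed _ y hmem (h𝒯 _ y (hlim _ tendsto_natCast_atTop_atTop))

/-- Lemma of Guerra–Koch–Lindberg: a sequentially `𝒯`-closed, translation-invariant set
containing a closed ball `B̄(x,r)` such that `τ_a x → 𝒯-converges` to `0` as `a → ∞`
also contains the closed ball `B̄(0,r)`. -/
theorem stmt_0 {X : Type*} [NormedAddCommGroup X] [NormedSpace ℝ X]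
    (𝒯 : TopologicalSpace X)
    (h𝒯 : ∀ (z : ℕ → X) (y : X),
      Tendsto z atTop (@nhds X 𝒯 0) → Tendsto (fun n => y + z n) atTop (@nhds X 𝒯 y))
    (τ : ℝ → X →ₗ[ℝ] X)
    (hiso : ∀ (a : ℝ) (x : X), ‖τ a x‖ = ‖x‖)
    (hid : τ 0 = LinearMap.id)
    (hgrp : ∀ a b : ℝ, τ (a + b) = (τ a).comp (τ b))
    (Z : Set X)
    (hclosed : ∀ (z : ℕ → X) (l : X), (∀ n, z n ∈ Z) →
      Tendsto z atTop (@nhds X 𝒯 l) → l ∈ Z)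
    (hinv : ∀ a : ℝ, (τ a) '' Z ⊆ Z)
    (x : X) (r : ℝ) (hr : 0 < r)
    (hball : {y : X | ‖y - x‖ ≤ r} ⊆ Z)
    (hlim : ∀ a : ℕ → ℝ, Tendsto a atTop atTop →
      Tendsto (fun n => τ (a n) x) atTop (@nhds X 𝒯 0)) :
    {y : X | ‖y‖ ≤ r} ⊆ Z :=
  stmt_0_general 𝒯 h𝒯 τ hiso hid hgrp Z hclosed hinv x r hball hlim
end

section
/- Fix r ∈ [1,∞) and a nondecreasing function G : (0,∞) → (0,∞). Define g : (0,∞) → (0,∞) by g(t) := 2^{−k} / G(2^{k/4})^r for t ∈ (2^{−k}, 2^{−k+1}], k ∈ ℤ. Then g is nondecreasing, and every measurable function f : (0,∞) → [0,∞] satisfying ∫_τ^∞ f(t) dt ≤ G(τ^{−1/4})^r for all τ > 0 satisfies ∫₀^1 f(t) g(t) dt ≤ 1. -/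
open MeasureTheory Set ENNReal

/-- The weight-construction lemma: the dyadic weight `g(t) = 2^{-k}/G(2^{k/4})^r` for
`t ∈ (2^{-k}, 2^{-k+1}]` is nondecreasing on `(0,∞)`, and every measurable
`f : (0,∞) → [0,∞]` with `∫_τ^∞ f ≤ G(τ^{-1/4})^r` for all `τ > 0` satisfies
`∫₀^1 f g ≤ 1`. -/
theorem stmt_11 (r : ℝ) (hr : 1 ≤ r)
    (G : ℝ → ℝ) (hGmono : MonotoneOn G (Ioi 0)) (hGpos : ∀ t : ℝ, 0 < t → 0 < G t)
    (g : ℝ → ℝ)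
    (hg : ∀ k : ℤ, ∀ t ∈ Ioc ((2:ℝ) ^ (-k)) ((2:ℝ) ^ (-k + 1)),
      g t = (2:ℝ) ^ (-k) / (G ((2:ℝ) ^ ((k : ℝ) / 4))) ^ r) :
    MonotoneOn g (Ioi 0) ∧
    ∀ f : ℝ → ℝ≥0∞, Measurable f →
      (∀ τ : ℝ, 0 < τ →
        (∫⁻ t in Ioi τ, f t) ≤ ENNReal.ofReal ((G (τ ^ (-(1/4) : ℝ))) ^ r)) →
      (∫⁻ t in Ioc (0:ℝ) 1, f t * ENNReal.ofReal (g t)) ≤ 1 := by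
  constructor
  · intro s hs t ht hst
    obtain ⟨m, hm⟩ := exists_mem_Ioc_zpow (mem_Ioi.1 hs) (one_lt_two (α := ℝ))
    obtain ⟨n, hn⟩ := exists_mem_Ioc_zpow (mem_Ioi.1 ht) (one_lt_two (α := ℝ))
    have hgs : g s = (2:ℝ) ^ m / (G ((2:ℝ) ^ (((-m : ℤ) : ℝ) / 4))) ^ r := by
      have := hg (-m) s (by simpa using hm)
      simpa using this
    have hgt : g t = (2:ℝ) ^ n / (G ((2:ℝ) ^ (((-n : ℤ) : ℝ) / 4))) ^ r := by
      have := hg (-n) t (by simpa using hn)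
      simpa using this
    have hmn : m ≤ n := by
      by_contra h
      push_neg at h
      have h1 : (2:ℝ) ^ (n + 1) ≤ (2:ℝ) ^ m := by
        apply zpow_le_zpow_right₀ one_le_two
        omega
      have := hm.1
      have := hn.2
      linarith
    rw [hgs, hgt]
    have hpow : ∀ k : ℤ, (0:ℝ) < (2:ℝ) ^ ((k : ℝ) / 4) := fun k =>
      Real.rpow_pos_of_pos two_pos _
    have hGr : ∀ k : ℤ, (0:ℝ) < (G ((2:ℝ) ^ ((k : ℝ) / 4))) ^ r := fun k =>
      Real.rpow_pos_of_pos (hGpos _ (hpow k)) _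
    apply div_le_div₀ (by positivity) (zpow_le_zpow_right₀ one_le_two hmn) (hGr (-n))
    apply Real.rpow_le_rpow (hGpos _ (hpow _)).le _ (by linarith)
    apply hGmono (mem_Ioi.2 (hpow _)) (mem_Ioi.2 (hpow _))
    apply Real.rpow_le_rpow_of_exponent_le one_le_two
    push_cast
    have : (m:ℝ) ≤ n := Int.cast_le.2 hmn
    linarith
  · intro f hf hfb
    set S : ℕ → Set ℝ := fun k => Ioc ((2:ℝ) ^ (-((k:ℤ)+1))) ((2:ℝ) ^ (-(k:ℤ))) with hS
    have hSm : ∀ k, MeasurableSet (S k) := fun k => measurableSet_Ioc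
    have hSd : Pairwise (Function.onFun Disjoint S) := by
      intro i j hij
      rw [Function.onFun, Set.Ioc_disjoint_Ioc]
      rcases lt_or_gt_of_ne hij with h | h
      · exact le_trans (min_le_right _ _)
          (le_trans (zpow_le_zpow_right₀ (one_le_two (α := ℝ)) (by omega)) (le_max_left _ _))
      · exact le_trans (min_le_left _ _)
          (le_trans (zpow_le_zpow_right₀ (one_le_two (α := ℝ)) (by omega)) (le_max_right _ _))
    have hU : Ioc (0:ℝ) 1 = ⋃ k, S k := by
      ext t
      simp only [mem_Ioc, mem_iUnion, hS]
      constructor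
      · rintro ⟨ht0, ht1⟩
        obtain ⟨n, hn⟩ := exists_mem_Ioc_zpow ht0 (one_lt_two (α := ℝ))
        have hn1 : n + 1 ≤ 0 := by
          by_contra h
          push_neg at h
          have : (1:ℝ) ≤ (2:ℝ) ^ n := by
            calc (1:ℝ) = (2:ℝ) ^ (0:ℤ) := by norm_num
            _ ≤ (2:ℝ) ^ n := zpow_le_zpow_right₀ one_le_two (by omega)
          linarith [hn.1]
        refine ⟨(-(n+1)).toNat, ?_, ?_⟩
        · have h' : (((-(n+1)).toNat : ℤ)) = -(n+1) := Int.toNat_of_nonneg (by omega)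
          rw [h', show (-(-(n+1)+1)) = n by ring]
          exact hn.1
        · have h' : (((-(n+1)).toNat : ℤ)) = -(n+1) := Int.toNat_of_nonneg (by omega)
          rw [h', show (-(-(n+1))) = n+1 by ring]
          exact hn.2
      · rintro ⟨k, hk1, hk2⟩
        constructor
        · exact lt_trans (zpow_pos two_pos _) hk1
        · calc t ≤ (2:ℝ) ^ (-(k:ℤ)) := hk2
            _ ≤ (2:ℝ) ^ (0:ℤ) := zpow_le_zpow_right₀ one_le_two (by omega)
            _ = 1 := by norm_num
    rw [hU, lintegral_iUnion hSm hSd]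
    -- bound each term
    have key : ∀ k : ℕ, (∫⁻ t in S k, f t * ENNReal.ofReal (g t)) ≤
        ENNReal.ofReal ((2:ℝ) ^ (-((k:ℤ)+1))) := by
      intro k
      have hval : ∀ t ∈ S k, g t = (2:ℝ) ^ (-((k:ℤ)+1)) /
          (G ((2:ℝ) ^ (((k:ℝ)+1) / 4))) ^ r := by
        intro t ht
        have := hg ((k:ℤ)+1) t (by
          simp only [hS, mem_Ioc] at ht ⊢
          constructor
          · exact ht.1
          · convert ht.2 using 2; ring)
        rw [this]
        push_cast
        ring_nf
      set c : ℝ := (2:ℝ) ^ (-((k:ℤ)+1)) / (G ((2:ℝ) ^ (((k:ℝ)+1) / 4))) ^ r with hc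
      have hGpos' : (0:ℝ) < (G ((2:ℝ) ^ (((k:ℝ)+1) / 4))) ^ r :=
        Real.rpow_pos_of_pos (hGpos _ (Real.rpow_pos_of_pos two_pos _)) _
      have h1 : (∫⁻ t in S k, f t * ENNReal.ofReal (g t)) =
          (∫⁻ t in S k, f t) * ENNReal.ofReal c := by
        rw [← lintegral_mul_const _ hf]
        apply setLIntegral_congr_fun (hSm k)
        intro t ht
        show f t * ENNReal.ofReal (g t) = f t * ENNReal.ofReal c
        rw [hval t ht]
      rw [h1]
      have h2 : (∫⁻ t in S k, f t) ≤
          ENNReal.ofReal ((G (((2:ℝ) ^ (-((k:ℤ)+1))) ^ (-(1/4) : ℝ))) ^ r) := by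
        refine le_trans (lintegral_mono_set ?_) (hfb _ (zpow_pos two_pos _))
        exact Ioc_subset_Ioi_self
      have h3 : ((2:ℝ) ^ (-((k:ℤ)+1))) ^ (-(1/4) : ℝ) = (2:ℝ) ^ (((k:ℝ)+1) / 4) := by
        rw [show ((2:ℝ) ^ (-((k:ℤ)+1))) = (2:ℝ) ^ ((-((k:ℤ)+1) : ℤ) : ℝ) from
          (Real.rpow_intCast 2 _).symm]
        rw [← Real.rpow_mul (by norm_num)]
        congr 1
        push_cast
        ring
      rw [h3] at h2
      calc (∫⁻ t in S k, f t) * ENNReal.ofReal c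
          ≤ ENNReal.ofReal ((G ((2:ℝ) ^ (((k:ℝ)+1) / 4))) ^ r) * ENNReal.ofReal c :=
            mul_le_mul_left h2 _
        _ = ENNReal.ofReal ((G ((2:ℝ) ^ (((k:ℝ)+1) / 4))) ^ r * c) :=
            (ENNReal.ofReal_mul hGpos'.le).symm
        _ = ENNReal.ofReal ((2:ℝ) ^ (-((k:ℤ)+1))) := by
            rw [hc, mul_comm, div_mul_cancel₀ _ hGpos'.ne']
    calc (∑' k, ∫⁻ t in S k, f t * ENNReal.ofReal (g t))
        ≤ ∑' k : ℕ, ENNReal.ofReal ((2:ℝ) ^ (-((k:ℤ)+1))) := ENNReal.tsum_le_tsum key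
      _ = ∑' k : ℕ, (2:ℝ≥0∞)⁻¹ ^ (k+1) := by
          congr 1; ext k
          rw [show (-((k:ℤ)+1)) = -(((k+1:ℕ)):ℤ) by push_cast; ring, zpow_neg,
            zpow_natCast,
            ENNReal.ofReal_inv_of_pos (by positivity), ENNReal.ofReal_pow (by norm_num),
            ENNReal.ofReal_ofNat, ← ENNReal.inv_pow]
      _ = 1 := by
          rw [show (fun k : ℕ => (2:ℝ≥0∞)⁻¹ ^ (k+1)) = fun k : ℕ => 2⁻¹ * 2⁻¹ ^ k by
            funext k; rw [pow_succ]; ring, ENNReal.tsum_mul_left, ENNReal.tsum_geometric,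
            ENNReal.one_sub_inv_two, inv_inv, ENNReal.inv_mul_cancel (by norm_num) (by norm_num)]
end
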